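/- arXiv:1704.08814 — 14 statements merged into one kernel-verified Lean document; each statement's English description precedes it below -/
import Mathlib

section
/- Every weakly clean ideal of a ring is a weakly exchange ideal. Specifically, if x in an ideal I satisfies x = u - e with u a unit and e an idempotent, then f = u⁻¹(1-e)u is an idempotent with x + f ∈ R(x² + x). -/
def IsWeaklyClean {R : Type*} [Ring R] (x : R) : Prop :=
  ∃ (u : Rˣ) (e : R), IsIdempotentElem e ∧ (x = ↑u + e ∨ x = ↑u - e)

def IsCleanElem {R : Type*} [Ring R] (x : R) : Prop :=
  ∃ (u : Rˣ) (e : R), IsIdempotentElem e ∧ x = ↑u + e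

lemma aux_idem {R : Type*} [Ring R] (u : Rˣ) (e : R) (he : IsIdempotentElem e) :
    IsIdempotentElem ((↑u⁻¹ : R) * (1 - e) * ↑u) := by
  have h1 : IsIdempotentElem (1 - e) := he.one_sub
  unfold IsIdempotentElem at h1 ⊢
  calc (↑u⁻¹ : R) * (1 - e) * ↑u * ((↑u⁻¹ : R) * (1 - e) * ↑u)
      = (↑u⁻¹ : R) * (1 - e) * (↑u * ↑u⁻¹) * (1 - e) * ↑u := by noncomm_ring
    _ = (↑u⁻¹ : R) * ((1 - e) * (1 - e)) * ↑u := by rw [u.mul_inv]; noncomm_ring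
    _ = (↑u⁻¹ : R) * (1 - e) * ↑u := by rw [h1]

lemma aux_key {R : Type*} [Ring R] (u : Rˣ) (e : R) (he : IsIdempotentElem e)
    (x : R) (hx : x = ↑u - e) :
    x + (↑u⁻¹ : R) * (1 - e) * ↑u = (↑u⁻¹ : R) * (x ^ 2 + x) := by
  subst hx
  have he' : e * e = e := he
  have h1 : ((↑u : R) - e) ^ 2 + ((↑u : R) - e)
      = ↑u * (((↑u : R) - e) + (↑u⁻¹ : R) * (1 - e) * ↑u) := by
    have h2 : (↑u : R) * ((↑u⁻¹ : R) * (1 - e) * ↑u) = (1 - e) * ↑u := by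
      rw [← mul_assoc, ← mul_assoc, u.mul_inv, one_mul]
    rw [mul_add, h2, sq]
    have : ((↑u:R) - e) * ((↑u:R) - e) = ↑u*↑u - ↑u*e - e*↑u + e := by
      rw [sub_mul, mul_sub, mul_sub, he']; noncomm_ring
    rw [this]; noncomm_ring
  rw [h1, ← mul_assoc, u.inv_mul, one_mul]

/-- Every weakly clean ideal is a weakly exchange ideal; moreover if x = u - e then
f = u⁻¹(1-e)u is an idempotent with x + f ∈ R(x² + x). -/
theorem stmt2 {R : Type*} [Ring R] (I : Ideal R)
    (hI : ∀ x ∈ I, IsWeaklyClean x) :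
    (∀ x ∈ I, ∃ f : R, IsIdempotentElem f ∧
      ((∃ r : R, f - x = r * (x - x ^ 2)) ∨ (∃ r : R, f + x = r * (x + x ^ 2)))) ∧
    (∀ (x : R) (u : Rˣ) (e : R), IsIdempotentElem e → x = ↑u - e →
      IsIdempotentElem ((↑u⁻¹ : R) * (1 - e) * ↑u) ∧
      ∃ r : R, x + (↑u⁻¹ : R) * (1 - e) * ↑u = r * (x ^ 2 + x)) := by
  constructor
  · intro x hx
    obtain ⟨u, e, he, hcase⟩ := hI x hx
    rcases hcase with h | h
    · -- x = u + e, so -x = (-u) - e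
      refine ⟨(↑(-u)⁻¹ : R) * (1 - e) * ↑(-u), aux_idem (-u) e he,
        Or.inl ⟨-(↑(-u)⁻¹ : R), ?_⟩⟩
      have hk := aux_key (-u) e he (-x) (by rw [h]; push_cast; noncomm_ring)
      calc (↑(-u)⁻¹ : R) * (1 - e) * ↑(-u) - x
          = -x + (↑(-u)⁻¹ : R) * (1 - e) * ↑(-u) := by noncomm_ring
        _ = (↑(-u)⁻¹ : R) * ((-x) ^ 2 + -x) := hk
        _ = -(↑(-u)⁻¹ : R) * (x - x ^ 2) := by noncomm_ring
    · refine ⟨(↑u⁻¹ : R) * (1 - e) * ↑u, aux_idem u e he, Or.inr ⟨(↑u⁻¹ : R), ?_⟩⟩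
      have hk := aux_key u e he x h
      calc (↑u⁻¹ : R) * (1 - e) * ↑u + x
          = x + (↑u⁻¹ : R) * (1 - e) * ↑u := by noncomm_ring
        _ = (↑u⁻¹ : R) * (x ^ 2 + x) := hk
        _ = (↑u⁻¹ : R) * (x + x ^ 2) := by noncomm_ring
  · intro x u e he hx
    exact ⟨aux_idem u e he, ⟨(↑u⁻¹ : R), aux_key u e he x hx⟩⟩
end

section
/- Let R be a ring and I an ideal in which every idempotent of R is central. If I is a weakly exchange ideal then I is a weakly clean ideal. In particular: if x ∈ I and e is an idempotent with e = ax, 1 - e = b(1+x), ea = a, (1-e)b = b, and all idempotents commute with everything, then x + (1-e) is a unit. -/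
/-- Rings with central idempotents are Dedekind-finite. -/
lemma abelian_dedekind_finite {R : Type*} [Ring R]
    (hcentral : ∀ e : R, IsIdempotentElem e → ∀ r : R, e * r = r * e)
    {u v : R} (h : v * u = 1) : u * v = 1 := by
  have hf : IsIdempotentElem (u * v) := by
    show u * v * (u * v) = u * v
    rw [mul_assoc, ← mul_assoc v u v, h, one_mul]
  have h0 : (1 - u * v) * u = 0 := by
    rw [sub_mul, one_mul, mul_assoc, h, mul_one, sub_self]
  have key : (1 : R) - u * v = 0 := by
    calc (1 : R) - u * v = (1 - u * v) * (v * u) := by rw [h, mul_one]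
      _ = ((1 - u * v) * v) * u := by rw [mul_assoc]
      _ = (v * (1 - u * v)) * u := by
          rw [sub_mul, mul_sub, one_mul, mul_one, hcentral _ hf v]
      _ = v * ((1 - u * v) * u) := by rw [mul_assoc]
      _ = 0 := by rw [h0, mul_zero]
  exact (sub_eq_zero.mp key).symm

/-- If every idempotent of R is central and I is a weakly exchange ideal, then
I is a weakly clean ideal. -/
theorem stmt3 {R : Type*} [Ring R] (I : Ideal R)
    (hcentral : ∀ e : R, IsIdempotentElem e → ∀ r : R, e * r = r * e)
    (hexch : ∀ x ∈ I, ∃ e : R, IsIdempotentElem e ∧ (∃ a : R, e = a * x) ∧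
      ((∃ b : R, 1 - e = b * (1 - x)) ∨ (∃ b : R, 1 - e = b * (1 + x)))) :
    ∀ x ∈ I, IsWeaklyClean x := by
  intro x hx
  obtain ⟨e, he, ⟨a, ha⟩, hb⟩ := hexch x hx
  have hce : ∀ r : R, e * r = r * e := hcentral e he
  have h1e : IsIdempotentElem (1 - e) := he.one_sub
  have hw : ((2 : R) * e - 1) * (2 * e - 1) = 1 := by
    have h : ((2 : R) * e - 1) * (2 * e - 1) = 4 * (e * e) - 4 * e + 1 := by
      noncomm_ring
    rw [h, he.eq]; noncomm_ring
  have h1 : e * a * x = e := by rw [mul_assoc, ← ha, he.eq]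
  have h2 : e * a * (1 - e) = 0 := by
    rw [hce a, mul_assoc, mul_sub, mul_one, he.eq, sub_self, mul_zero]
  rcases hb with ⟨b, hb⟩ | ⟨b, hb⟩
  · -- 1 - e = b * (1 - x); u₀ = x - (1 - e) is a unit
    have hcb : (1 - e) * b = b * (1 - e) := by
      rw [sub_mul, mul_sub, one_mul, mul_one, hce b]
    have h4 : (1 - e) * b * (1 - e) = (1 - e) * b := by
      rw [hcb, mul_assoc, h1e.eq]
    have h3 : (1 - e) * b * x = (1 - e) * b - (1 - e) := by
      have hthis : (1 - e) * b * (1 - x) = 1 - e := by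
        rw [mul_assoc, ← hb, h1e.eq]
      rw [mul_sub, mul_one] at hthis
      exact eq_sub_iff_add_eq.mpr (by rw [add_comm]; exact (sub_eq_iff_eq_add.mp hthis).symm)
    have key : (e * a + (1 - e) * b) * (x - (1 - e)) = 2 * e - 1 := by
      have expand : (e * a + (1 - e) * b) * (x - (1 - e)) =
          (e * a * x + (1 - e) * b * x) - (e * a * (1 - e) + (1 - e) * b * (1 - e)) := by
        noncomm_ring
      rw [expand, h1, h2, h3, h4]
      noncomm_ring
    set u0 : R := x - (1 - e) with hu0
    set u1 : R := (2 * e - 1) * (e * a + (1 - e) * b) with hu1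
    have hleft : u1 * u0 = 1 := by rw [hu1, mul_assoc, key, hw]
    have hright : u0 * u1 = 1 := abelian_dedekind_finite hcentral hleft
    refine ⟨⟨u0, u1, hright, hleft⟩, 1 - e, h1e, Or.inl ?_⟩
    show x = u0 + (1 - e)
    rw [hu0]; abel
  · -- 1 - e = b * (1 + x); u₀ = x + (1 - e) is a unit
    have hcb : (1 - e) * b = b * (1 - e) := by
      rw [sub_mul, mul_sub, one_mul, mul_one, hce b]
    have h4 : (1 - e) * b * (1 - e) = (1 - e) * b := by
      rw [hcb, mul_assoc, h1e.eq]
    have h3 : (1 - e) * b * x = (1 - e) - (1 - e) * b := by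
      have hthis : (1 - e) * b * (1 + x) = 1 - e := by
        rw [mul_assoc, ← hb, h1e.eq]
      rw [mul_add, mul_one] at hthis
      exact eq_sub_iff_add_eq.mpr (by rw [add_comm]; exact hthis)
    have key : (e * a - (1 - e) * b) * (x + (1 - e)) = 2 * e - 1 := by
      have expand : (e * a - (1 - e) * b) * (x + (1 - e)) =
          (e * a * x + e * a * (1 - e)) - ((1 - e) * b * x + (1 - e) * b * (1 - e)) := by
        noncomm_ring
      rw [expand, h1, h2, h3, h4]
      noncomm_ring
    set u0 : R := x + (1 - e) with hu0
    set u1 : R := (2 * e - 1) * (e * a - (1 - e) * b) with hu1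
    have hleft : u1 * u0 = 1 := by rw [hu1, mul_assoc, key, hw]
    have hright : u0 * u1 = 1 := abelian_dedekind_finite hcentral hleft
    refine ⟨⟨u0, u1, hright, hleft⟩, 1 - e, h1e, Or.inr ?_⟩
    show x = u0 - (1 - e)
    rw [hu0]; abel
end

section
/- In a ring R with central idempotents, if x ∈ R and there exist a, b ∈ R with ax an idempotent, b(1+x) an idempotent, ax·a = a (i.e. axa = a), and b(1+x)b = b, and ax + b(1+x) = 1, then (a+b)(x + (1 - ax)) = 1, so x + (1 - ax) is right invertible. -/
/-- In a ring with central idempotents, under the stated conditions,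
(a+b)(x + (1 - ax)) = 1. -/
theorem stmt4 {R : Type*} [Ring R]
    (hcentral : ∀ e : R, IsIdempotentElem e → ∀ r : R, e * r = r * e)
    (x a b : R)
    (h1 : IsIdempotentElem (a * x))
    (h2 : IsIdempotentElem (b * (1 + x)))
    (h3 : a * x * a = a)
    (h4 : b * (1 + x) * b = b)
    (h5 : a * x + b * (1 + x) = 1) :
    (a + b) * (x + (1 - a * x)) = 1 := by
  have hae : a * (a * x) = a := by rw [← hcentral _ h1 a, h3]
  have hbf : b * (b * (1 + x)) = b := by rw [← hcentral _ h2 b, h4]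
  have hbe : b * (a * x) = 0 := by
    have h5' : a * x = 1 - b * (1 + x) := eq_sub_of_add_eq h5
    rw [h5', mul_sub, mul_one, hbf, sub_self]
  have key : (a + b) * (x + (1 - a * x)) =
      a * x + (a - a * (a * x)) + (b * (1 + x) - b * (a * x)) := by noncomm_ring
  rw [key, hae, hbe, sub_self, sub_zero, add_zero, h5]
end

section
/- Let I be an ideal of a commutative ring R and n ≥ 2. If I is a clean ideal of R, then M_n(I) is a weakly clean (indeed clean) ideal of M_n(R). -/
lemma IsCleanElem.map {R S : Type*} [Ring R] [Ring S] (f : R ≃+* S) {x : R}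
    (h : IsCleanElem x) : IsCleanElem (f x) := by
  obtain ⟨u, e, he, hx⟩ := h
  refine ⟨Units.map (f : R →* S) u, f e, ?_, ?_⟩
  · show f e * f e = f e
    rw [← map_mul, he]
  · rw [hx, map_add]; rfl

lemma isCleanElem_of_map {R S : Type*} [Ring R] [Ring S] (f : R ≃+* S) {x : R}
    (h : IsCleanElem (f x)) : IsCleanElem x := by
  have := h.map f.symm
  rwa [RingEquiv.symm_apply_apply] at this

lemma matrix_clean_aux {R : Type*} [CommRing R] (I : Ideal R)
    (hI : ∀ x ∈ I, IsCleanElem x) :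
    ∀ n, ∀ M : Matrix (Fin n) (Fin n) R, (∀ i j, M i j ∈ I) → IsCleanElem M := by
  intro n
  induction n with
  | zero =>
    intro M _
    exact ⟨1, 0, by simp [IsIdempotentElem], by ext i; exact i.elim0⟩
  | succ n IH =>
    intro M hM
    set σ : Fin (n + 1) ≃ Fin 1 ⊕ Fin n := (finSumFinEquiv.trans (finCongr (Nat.add_comm 1 n))).symm with hσ
    set N : Matrix (Fin 1 ⊕ Fin n) (Fin 1 ⊕ Fin n) R := Matrix.reindex σ σ M with hNdef
    have hNI : ∀ i j, N i j ∈ I := fun i j => hM _ _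
    set A := N.toBlocks₁₁ with hA
    set B := N.toBlocks₁₂ with hB
    set C := N.toBlocks₂₁ with hC
    set D := N.toBlocks₂₂ with hD
    have hN : N = Matrix.fromBlocks A B C D := (Matrix.fromBlocks_toBlocks N).symm
    -- corner entry is clean
    obtain ⟨u, e, he, hae⟩ := hI (A 0 0) (hNI (Sum.inl 0) (Sum.inl 0))
    -- Schur complement lives in I
    set S : Matrix (Fin n) (Fin n) R := D - (↑u⁻¹ : R) • (C * B) with hSdef
    have hSI : ∀ i j, S i j ∈ I := by
      intro i j
      have hCB : (C * B) i j ∈ I := by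
        rw [Matrix.mul_apply]
        exact Ideal.sum_mem I fun k _ =>
          Ideal.mul_mem_right _ _ (hNI (Sum.inr i) (Sum.inl k))
      exact Ideal.sub_mem I (hNI (Sum.inr i) (Sum.inr j))
        (Ideal.mul_mem_left I _ hCB)
    obtain ⟨V, F, hF, hS⟩ := IH S hSI
    -- the invertible corner
    set A' : Matrix (Fin 1) (Fin 1) R := (↑u : R) • 1 with hA'
    letI : Invertible A' := ⟨(↑u⁻¹ : R) • (1 : Matrix (Fin 1) (Fin 1) R),
      by rw [hA', Matrix.smul_mul, Matrix.mul_smul, Matrix.one_mul, smul_smul,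
        Units.inv_mul, one_smul],
      by rw [hA', Matrix.smul_mul, Matrix.mul_smul, Matrix.one_mul, smul_smul,
        Units.mul_inv, one_smul]⟩
    have hinv : ⅟ A' = (↑u⁻¹ : R) • (1 : Matrix (Fin 1) (Fin 1) R) := rfl
    have hSchur : (D - F) - C * ⅟ A' * B = (↑V : Matrix (Fin n) (Fin n) R) := by
      rw [hinv, Matrix.mul_smul, Matrix.mul_one, Matrix.smul_mul]
      have h1 : D - F - (↑u⁻¹ : R) • (C * B) = S - F := by
        rw [hSdef, sub_right_comm]
      rw [h1, hS, add_sub_cancel_right]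
    haveI : Invertible ((D - F) - C * ⅟ A' * B) := hSchur ▸ V.invertible
    haveI hUinv : Invertible (Matrix.fromBlocks A' B C (D - F)) :=
      Matrix.fromBlocks₁₁Invertible A' B C (D - F)
    -- the idempotent
    set E : Matrix (Fin 1 ⊕ Fin n) (Fin 1 ⊕ Fin n) R :=
      Matrix.fromBlocks ((e : R) • 1) 0 0 F with hE
    have hEid : IsIdempotentElem E := by
      show E * E = E
      rw [hE, Matrix.fromBlocks_multiply]
      simp only [Matrix.mul_zero, Matrix.zero_mul, add_zero, zero_add, smul_zero,
        Matrix.smul_mul, Matrix.mul_smul, Matrix.one_mul, smul_smul, he.eq, hF.eq]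
    -- N decomposes
    have hAeq : A = A' + (e : R) • 1 := by
      ext i j
      fin_cases i; fin_cases j
      simp [hA', hae, Matrix.one_apply]
    have hNsplit : N = Matrix.fromBlocks A' B C (D - F) + E := by
      rw [hN, hE, Matrix.fromBlocks_add]
      simp only [add_zero, sub_add_cancel, ← hAeq]
    have hNclean : IsCleanElem N :=
      ⟨(isUnit_of_invertible (Matrix.fromBlocks A' B C (D - F))).unit, E, hEid, by
        rw [IsUnit.unit_spec]; exact hNsplit⟩
    have : N = (Matrix.reindexAlgEquiv R R σ) M := rfl
    rw [this] at hNclean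
    exact isCleanElem_of_map (Matrix.reindexAlgEquiv R R σ).toRingEquiv hNclean

/-- If I is a clean ideal of a commutative ring R and n ≥ 2, then Mₙ(I) is a
weakly clean (indeed clean) ideal of Mₙ(R). -/
theorem stmt6 {R : Type*} [CommRing R] {n : ℕ} (hn : 2 ≤ n) (I : Ideal R)
    (hI : ∀ x ∈ I, IsCleanElem x) :
    ∀ M : Matrix (Fin n) (Fin n) R, (∀ i j, M i j ∈ I) →
      IsCleanElem M ∧ IsWeaklyClean M := by
  intro M hM
  have h := matrix_clean_aux I hI n M hM
  refine ⟨h, ?_⟩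
  obtain ⟨u, e, he, hx⟩ := h
  exact ⟨u, e, he, Or.inl hx⟩
end

section
/- Let {R_α} be a family of rings with ideals I_α ⊆ R_α. If the product ideal I = ∏ I_α is a weakly clean ideal of R = ∏ R_α, then each I_α is a weakly clean ideal of R_α. -/
/-- If the product ideal ∏ Iα is weakly clean in ∏ Rα, then each Iα is weakly clean. -/
theorem stmt7 {ι : Type*} {R : ι → Type*} [∀ α, Ring (R α)] (I : ∀ α, Ideal (R α))
    (h : ∀ x : (∀ α, R α), (∀ α, x α ∈ I α) → IsWeaklyClean x) :
    ∀ α, ∀ a ∈ I α, IsWeaklyClean a := by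
  classical
  intro α a ha
  obtain ⟨u, e, he, hx⟩ := h (Pi.single α a) (by
    intro β
    by_cases hb : β = α
    · subst hb; simpa using ha
    · simp [Pi.single_eq_of_ne hb])
  refine ⟨Units.map (Pi.evalRingHom R α).toMonoidHom u, e α, ?_, ?_⟩
  · exact congrFun he α
  · rcases hx with hx | hx
    · left; simpa using congrFun hx α
    · right; simpa using congrFun hx α
end

section
/- Let R₁, R₂ be rings with ideals I₁ ⊆ R₁ and I₂ ⊆ R₂. If I₁ × I₂ is a weakly clean ideal of R₁ × R₂, then I₁ or I₂ is a clean ideal. Equivalently: if there exist x₁ ∈ I₁ that is not of the form u - e (unit minus idempotent in R₁) and x₂ ∈ I₂ not of the form u + e (unit plus idempotent in R₂), then (x₁, x₂) ∈ I₁ × I₂ is not weakly clean in R₁ × R₂. -/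
/-- If I₁ × I₂ is a weakly clean ideal of R₁ × R₂, then I₁ or I₂ is a clean ideal. -/
theorem stmt8 {R₁ R₂ : Type*} [Ring R₁] [Ring R₂] (I₁ : Ideal R₁) (I₂ : Ideal R₂)
    (h : ∀ x : R₁ × R₂, x.1 ∈ I₁ → x.2 ∈ I₂ → IsWeaklyClean x) :
    (∀ a ∈ I₁, IsCleanElem a) ∨ (∀ b ∈ I₂, IsCleanElem b) := by
  by_contra hc
  push_neg at hc
  obtain ⟨⟨a, ha, hna⟩, ⟨b, hb, hnb⟩⟩ := hc
  obtain ⟨u, e, he, hcase⟩ := h (-a, b) (I₁.neg_mem ha) hb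
  set u₁ := (MulEquiv.prodUnits u).1 with hu₁
  set u₂ := (MulEquiv.prodUnits u).2 with hu₂
  have hc₁ : (u₁ : R₁) = (u : R₁ × R₂).1 := rfl
  have hc₂ : (u₂ : R₂) = (u : R₁ × R₂).2 := rfl
  rcases hcase with heq | heq
  · exact hnb ⟨u₂, e.2, congrArg Prod.snd he, by rw [hc₂]; exact congrArg Prod.snd heq⟩
  · refine hna ⟨-u₁, e.1, congrArg Prod.fst he, ?_⟩
    have h1 : -a = (u₁ : R₁) - e.1 := by rw [hc₁]; exact congrArg Prod.fst heq
    have : a = e.1 - (u₁ : R₁) := by rw [← neg_neg a, h1, neg_sub]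
    rw [this, Units.val_neg, sub_eq_neg_add]
end

section
/- Let R₁, R₂ be rings, I₁ a weakly clean ideal of R₁ and I₂ a clean ideal of R₂. Then I₁ × I₂ is a weakly clean ideal of R₁ × R₂. -/
/-- A pair of units gives a unit of the product ring. -/
def prodUnit {R₁ R₂ : Type*} [Ring R₁] [Ring R₂] (u : R₁ˣ) (v : R₂ˣ) : (R₁ × R₂)ˣ :=
  ⟨(↑u, ↑v), (↑u⁻¹, ↑v⁻¹), by ext <;> simp, by ext <;> simp⟩

/-- If I₁ is a weakly clean ideal of R₁ and I₂ is a clean ideal of R₂, then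
I₁ × I₂ is a weakly clean ideal of R₁ × R₂. -/
theorem stmt9 {R₁ R₂ : Type*} [Ring R₁] [Ring R₂] (I₁ : Ideal R₁) (I₂ : Ideal R₂)
    (h₁ : ∀ a ∈ I₁, IsWeaklyClean a) (h₂ : ∀ b ∈ I₂, IsCleanElem b) :
    ∀ x : R₁ × R₂, x.1 ∈ I₁ → x.2 ∈ I₂ → IsWeaklyClean x := by
  rintro ⟨a, b⟩ ha hb
  obtain ⟨u, e, he, hae⟩ := h₁ a ha
  rcases hae with h | h
  · obtain ⟨v, f, hf, hbf⟩ := h₂ b hb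
    refine ⟨prodUnit u v, (e, f), ?_, Or.inl ?_⟩
    · ext <;> simp [IsIdempotentElem.eq he, IsIdempotentElem.eq hf]
    · ext <;> simp [prodUnit, h, hbf]
  · obtain ⟨v, f, hf, hbf⟩ := h₂ (-b) (neg_mem hb)
    have hb' : b = -↑v - f := by
      have : b = -(↑v + f) := by rw [← hbf, neg_neg]
      rw [this, neg_add]; abel
    refine ⟨prodUnit u (-v), (e, f), ?_, Or.inr ?_⟩
    · ext <;> simp [IsIdempotentElem.eq he, IsIdempotentElem.eq hf]
    · ext <;> simp [prodUnit, h, hb']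
end

section
/- Every idempotent contained in a uniquely weakly clean ideal of a ring R is central in R. -/
/-- Every idempotent in a uniquely weakly clean ideal is central. -/
theorem stmt10 {R : Type*} [Ring R] (I : Ideal R)
    (hI : ∀ a ∈ I, ∃! e : R, IsIdempotentElem e ∧ (IsUnit (a - e) ∨ IsUnit (a + e)))
    (e : R) (heI : e ∈ I) (he : IsIdempotentElem e) :
    ∀ r : R, e * r = r * e := by
  intro r
  have hee : e * e = e := he
  obtain ⟨g, hg, hgu⟩ := hI e heI
  have h1 : (1 : R) - e = g := by
    refine hgu _ ⟨he.one_sub, Or.inl ?_⟩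
    have hu : (e - (1 - e)) * (e - (1 - e)) = 1 := by
      first | noncomm_ring | abel
      simp only [← mul_assoc, hee]
      first | noncomm_ring | abel
    exact ⟨⟨_, _, hu, hu⟩, rfl⟩
  have h2 : (1 : R) - (e + (1-e)*r*e) = g := by
    refine hgu _ ⟨?_, Or.inl ?_⟩
    · refine IsIdempotentElem.one_sub ?_
      show (e + (1-e)*r*e) * (e + (1-e)*r*e) = e + (1-e)*r*e
      first | noncomm_ring | abel
      simp only [← mul_assoc, hee]
      first | noncomm_ring | abel
    · have hu : (e - (1 - (e + (1-e)*r*e))) * (e - (1 - (e + (1-e)*r*e))) = 1 := by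
        first | noncomm_ring | abel
        simp only [← mul_assoc, hee]
        first | noncomm_ring | abel
      exact ⟨⟨_, _, hu, hu⟩, rfl⟩
  have h3 : (1 : R) - (e + e*r*(1-e)) = g := by
    refine hgu _ ⟨?_, Or.inl ?_⟩
    · refine IsIdempotentElem.one_sub ?_
      show (e + e*r*(1-e)) * (e + e*r*(1-e)) = e + e*r*(1-e)
      first | noncomm_ring | abel
      simp only [← mul_assoc, hee]
      first | noncomm_ring | abel
    · have hu : (e - (1 - (e + e*r*(1-e)))) * (e - (1 - (e + e*r*(1-e)))) = 1 := by
        first | noncomm_ring | abel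
        simp only [← mul_assoc, hee]
        first | noncomm_ring | abel
      exact ⟨⟨_, _, hu, hu⟩, rfl⟩
  have e1 : (1-e)*r*e = 0 := by
    have h := sub_right_injective (h2.trans h1.symm)
    exact (add_eq_left).mp h
  have e2 : e*r*(1-e) = 0 := by
    have h := sub_right_injective (h3.trans h1.symm)
    exact (add_eq_left).mp h
  have q1 : r*e = e*r*e := by
    have hh : (1-e)*r*e = r*e - e*r*e := by noncomm_ring
    rw [hh] at e1
    exact sub_eq_zero.mp e1
  have q2 : e*r = e*r*e := by
    have hh : e*r*(1-e) = e*r - e*r*e := by noncomm_ring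
    rw [hh] at e2
    exact sub_eq_zero.mp e2
  rw [q2]; exact q1.symm
end

section
/- Let T = [[R, M], [N, S]] be the ring of a Morita context. If I is a weakly clean ideal of R and J is a clean ideal of S, then the ideal [[I, M], [N, J]] is a weakly clean ideal of T. Key step: if u ∈ U(R), v ∈ U(S), m ∈ M, n ∈ N and the pairings are zero (or the context makes the displayed inverse formula valid), then the matrix [[u, m], [n, v]] is a unit in T with inverse [[u⁻¹, -u⁻¹mv⁻¹], [-v⁻¹nu⁻¹, v⁻¹]]. -/
section Morita
variable (R S N M : Type*) [Ring R] [Ring S] [AddCommGroup N] [AddCommGroup M]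
  [Module R N] [Module Sᵐᵒᵖ N] [SMulCommClass R Sᵐᵒᵖ N]
  [Module S M] [Module Rᵐᵒᵖ M] [SMulCommClass S Rᵐᵒᵖ M]

/-- The ring T = [[R, N], [M, S]] of a Morita context with zero pairings:
N is the (R,S)-bimodule in the upper-right corner and M the (S,R)-bimodule in
the lower-left corner; products M·N and N·M are zero. -/
abbrev MoritaRing := R × N × M × S

namespace MoritaRing

variable {R S N M}

instance : Mul (MoritaRing R S N M) :=
  ⟨fun x y => (x.1 * y.1,
    x.1 • y.2.1 + MulOpposite.op y.2.2.2 • x.2.1,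
    MulOpposite.op y.1 • x.2.2.1 + x.2.2.2 • y.2.2.1,
    x.2.2.2 * y.2.2.2)⟩

instance : One (MoritaRing R S N M) := ⟨(1, 0, 0, 1)⟩

theorem mul_def (x y : MoritaRing R S N M) :
    x * y = (x.1 * y.1,
      x.1 • y.2.1 + MulOpposite.op y.2.2.2 • x.2.1,
      MulOpposite.op y.1 • x.2.2.1 + x.2.2.2 • y.2.2.1,
      x.2.2.2 * y.2.2.2) := rfl

theorem one_def : (1 : MoritaRing R S N M) = ((1 : R), (0 : N), (0 : M), (1 : S)) := rfl

instance instRing : Ring (MoritaRing R S N M) where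
  __ := (inferInstance : AddCommGroup (MoritaRing R S N M))
  left_distrib x y z := by
    refine Prod.ext ?_ (Prod.ext ?_ (Prod.ext ?_ ?_)) <;>
      simp [mul_def, mul_add, smul_add, add_smul] <;> abel
  right_distrib x y z := by
    refine Prod.ext ?_ (Prod.ext ?_ (Prod.ext ?_ ?_)) <;>
      simp [mul_def, add_mul, add_smul, smul_add] <;> abel
  zero_mul x := by
    refine Prod.ext ?_ (Prod.ext ?_ (Prod.ext ?_ ?_)) <;> simp [mul_def]
  mul_zero x := by
    refine Prod.ext ?_ (Prod.ext ?_ (Prod.ext ?_ ?_)) <;> simp [mul_def]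
  mul_assoc x y z := by
    refine Prod.ext ?_ (Prod.ext ?_ (Prod.ext ?_ ?_)) <;>
      simp [mul_def, mul_assoc, smul_add, mul_smul, MulOpposite.op_mul, smul_comm] <;> abel
  one_mul x := by
    refine Prod.ext ?_ (Prod.ext ?_ (Prod.ext ?_ ?_)) <;> simp [mul_def, one_def]
  mul_one x := by
    refine Prod.ext ?_ (Prod.ext ?_ (Prod.ext ?_ ?_)) <;> simp [mul_def, one_def]

end MoritaRing
end Morita

section Aux
variable {R S N M : Type*} [Ring R] [Ring S] [AddCommGroup N] [AddCommGroup M]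
    [Module R N] [Module Sᵐᵒᵖ N] [SMulCommClass R Sᵐᵒᵖ N]
    [Module S M] [Module Rᵐᵒᵖ M] [SMulCommClass S Rᵐᵒᵖ M]

theorem morita_key (u : Rˣ) (v : Sˣ) (n : N) (m : M) :
      (((u : R), n, m, (v : S)) : MoritaRing R S N M) *
        (((u⁻¹ : Rˣ) : R),
          -((u⁻¹ : Rˣ) • (MulOpposite.op ((v⁻¹ : Sˣ) : S) • n)),
          -((v⁻¹ : Sˣ) • (MulOpposite.op ((u⁻¹ : Rˣ) : R) • m)),
          ((v⁻¹ : Sˣ) : S)) = 1 ∧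
      ((((u⁻¹ : Rˣ) : R),
          -((u⁻¹ : Rˣ) • (MulOpposite.op ((v⁻¹ : Sˣ) : S) • n)),
          -((v⁻¹ : Sˣ) • (MulOpposite.op ((u⁻¹ : Rˣ) : R) • m)),
          ((v⁻¹ : Sˣ) : S)) : MoritaRing R S N M) *
        (((u : R), n, m, (v : S))) = 1 := by
  constructor <;>
  · refine Prod.ext ?_ (Prod.ext ?_ (Prod.ext ?_ ?_)) <;>
      simp [MoritaRing.mul_def, MoritaRing.one_def, Units.smul_def, smul_smul,
        ← MulOpposite.op_mul, smul_comm]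

/-- (u,n,m,v) is a unit of the Morita ring. -/
noncomputable def moritaUnit (u : Rˣ) (v : Sˣ) (n : N) (m : M) :
    (MoritaRing R S N M)ˣ where
  val := ((u : R), n, m, (v : S))
  inv := (((u⁻¹ : Rˣ) : R),
          -((u⁻¹ : Rˣ) • (MulOpposite.op ((v⁻¹ : Sˣ) : S) • n)),
          -((v⁻¹ : Sˣ) • (MulOpposite.op ((u⁻¹ : Rˣ) : R) • m)),
          ((v⁻¹ : Sˣ) : S))
  val_inv := (morita_key u v n m).1
  inv_val := (morita_key u v n m).2

theorem morita_idem {e : R} {f : S} (he : IsIdempotentElem e) (hf : IsIdempotentElem f) :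
    IsIdempotentElem (((e, 0, 0, f) : MoritaRing R S N M)) := by
  refine Prod.ext ?_ (Prod.ext ?_ (Prod.ext ?_ ?_)) <;>
    simp [MoritaRing.mul_def, he.eq, hf.eq]

end Aux

/-- If I is a weakly clean ideal of R and J a clean ideal of S, then [[I,N],[M,J]]
is a weakly clean ideal of the Morita context ring T = [[R,N],[M,S]] (zero pairings).
Key step: [[u,n],[m,v]] is a unit of T with inverse [[u⁻¹, -u⁻¹nv⁻¹],[-v⁻¹mu⁻¹, v⁻¹]]. -/


theorem stmt11 {R S N M : Type*} [Ring R] [Ring S] [AddCommGroup N] [AddCommGroup M]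
    [Module R N] [Module Sᵐᵒᵖ N] [SMulCommClass R Sᵐᵒᵖ N]
    [Module S M] [Module Rᵐᵒᵖ M] [SMulCommClass S Rᵐᵒᵖ M]
    (I : Ideal R) (J : Ideal S)
    (hI : ∀ a ∈ I, IsWeaklyClean a) (hJ : ∀ b ∈ J, IsCleanElem b) :
    (∀ x : MoritaRing R S N M, x.1 ∈ I → x.2.2.2 ∈ J → IsWeaklyClean x) ∧
    (∀ (u : Rˣ) (v : Sˣ) (n : N) (m : M),
      (((u : R), n, m, (v : S)) : MoritaRing R S N M) *
        (((u⁻¹ : Rˣ) : R),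
          -((u⁻¹ : Rˣ) • (MulOpposite.op ((v⁻¹ : Sˣ) : S) • n)),
          -((v⁻¹ : Sˣ) • (MulOpposite.op ((u⁻¹ : Rˣ) : R) • m)),
          ((v⁻¹ : Sˣ) : S)) = 1 ∧
      ((((u⁻¹ : Rˣ) : R),
          -((u⁻¹ : Rˣ) • (MulOpposite.op ((v⁻¹ : Sˣ) : S) • n)),
          -((v⁻¹ : Sˣ) • (MulOpposite.op ((u⁻¹ : Rˣ) : R) • m)),
          ((v⁻¹ : Sˣ) : S)) : MoritaRing R S N M) *
        (((u : R), n, m, (v : S))) = 1) := by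
  refine ⟨?_, fun u v n m => morita_key u v n m⟩
  rintro ⟨a, n, m, b⟩ ha hb
  obtain ⟨u, e, he, hae⟩ := hI a ha
  rcases hae with h1 | h1
  · obtain ⟨v, f, hf, h2⟩ := hJ b hb
    refine ⟨moritaUnit u v n m, (e, 0, 0, f), morita_idem he hf, Or.inl ?_⟩
    refine Prod.ext ?_ (Prod.ext ?_ (Prod.ext ?_ ?_)) <;>
      simp [moritaUnit, h1, h2, Prod.add_def]
  · obtain ⟨v, f, hf, h2⟩ := hJ (-b) (neg_mem hb)
    refine ⟨moritaUnit u (-v) n m, (e, 0, 0, f), morita_idem he hf, Or.inr ?_⟩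
    have hb' : b = (((-v : Sˣ) : S)) - f := by
      have h3 : b = -((v : S) + f) := by rw [← h2, neg_neg]
      rw [h3, Units.val_neg, neg_add, sub_eq_add_neg]
    refine Prod.ext ?_ (Prod.ext ?_ (Prod.ext ?_ ?_)) <;>
      simp [moritaUnit, h1, hb', Prod.sub_def]
end

section
/- In the formal triangular matrix ring T = [[R, 0], [M, S]] (with M an (S,R)-bimodule and zero pairing), a matrix [[u, 0], [m, v]] is a unit of T whenever u ∈ U(R) and v ∈ U(S), and [[e, 0], [0, f]] is an idempotent of T whenever e, f are idempotents. Consequently, if I is a weakly clean ideal of R and J is a clean ideal of S then [[I, 0], [M, J]] is a weakly clean ideal of T. -/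
section Tri
variable (A1 A2 M : Type*) [Ring A1] [Ring A2] [AddCommGroup M]
  [Module A2 M] [Module A1ᵐᵒᵖ M] [SMulCommClass A2 A1ᵐᵒᵖ M]

/-- The formal lower triangular matrix ring [[A1, 0], [M, A2]]. -/
abbrev Tri := A1 × M × A2

namespace Tri

variable {A1 A2 M}

instance : Mul (Tri A1 A2 M) :=
  ⟨fun x y => (x.1 * y.1, MulOpposite.op y.1 • x.2.1 + x.2.2 • y.2.1, x.2.2 * y.2.2)⟩

instance : One (Tri A1 A2 M) := ⟨(1, 0, 1)⟩

theorem mul_def (x y : Tri A1 A2 M) :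
    x * y = (x.1 * y.1, MulOpposite.op y.1 • x.2.1 + x.2.2 • y.2.1, x.2.2 * y.2.2) := rfl

theorem one_def : (1 : Tri A1 A2 M) = ((1 : A1), (0 : M), (1 : A2)) := rfl

instance instRing : Ring (Tri A1 A2 M) where
  __ := (inferInstance : AddCommGroup (Tri A1 A2 M))
  left_distrib x y z := by
    refine Prod.ext ?_ (Prod.ext ?_ ?_) <;>
      simp [mul_def, mul_add, smul_add, add_smul] <;> abel
  right_distrib x y z := by
    refine Prod.ext ?_ (Prod.ext ?_ ?_) <;>
      simp [mul_def, add_mul, add_smul, smul_add] <;> abel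
  zero_mul x := by
    refine Prod.ext ?_ (Prod.ext ?_ ?_) <;> simp [mul_def, one_def]
  mul_zero x := by
    refine Prod.ext ?_ (Prod.ext ?_ ?_) <;> simp [mul_def, one_def]
  mul_assoc x y z := by
    refine Prod.ext ?_ (Prod.ext ?_ ?_) <;>
      simp [mul_def, mul_assoc, smul_add, mul_smul, MulOpposite.op_mul, smul_comm] <;> abel
  one_mul x := by
    refine Prod.ext ?_ (Prod.ext ?_ ?_) <;> simp [mul_def, one_def]
  mul_one x := by
    refine Prod.ext ?_ (Prod.ext ?_ ?_) <;> simp [mul_def, one_def]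

end Tri
end Tri

/-- In T = [[A1,0],[M,A2]]: [[u,0],[m,v]] is a unit whenever u, v are units;
[[e,0],[0,f]] is idempotent whenever e, f are idempotents; consequently if I is a
weakly clean ideal of A1 and J a clean ideal of A2 then [[I,0],[M,J]] is a weakly
clean ideal of T. -/
theorem stmt12 {A1 A2 M : Type*} [Ring A1] [Ring A2] [AddCommGroup M]
    [Module A2 M] [Module A1ᵐᵒᵖ M] [SMulCommClass A2 A1ᵐᵒᵖ M]
    (I : Ideal A1) (J : Ideal A2)
    (hI : ∀ a ∈ I, IsWeaklyClean a) (hJ : ∀ b ∈ J, IsCleanElem b) :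
    (∀ (u : A1ˣ) (v : A2ˣ) (m : M), IsUnit (((u : A1), m, (v : A2)) : Tri A1 A2 M)) ∧
    (∀ (e : A1) (f : A2), IsIdempotentElem e → IsIdempotentElem f →
      IsIdempotentElem ((e, (0 : M), f) : Tri A1 A2 M)) ∧
    (∀ x : Tri A1 A2 M, x.1 ∈ I → x.2.2 ∈ J → IsWeaklyClean x) := by
  have hunit : ∀ (u : A1ˣ) (v : A2ˣ) (m : M),
      IsUnit (((u : A1), m, (v : A2)) : Tri A1 A2 M) := by
    intro u v m
    refine ⟨⟨((u : A1), m, (v : A2)),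
      ((↑u⁻¹ : A1), -((↑v⁻¹ : A2) • (MulOpposite.op (↑u⁻¹ : A1) • m)), (↑v⁻¹ : A2)), ?_, ?_⟩, rfl⟩
    · refine Prod.ext ?_ (Prod.ext ?_ ?_) <;>
        simp [Tri.mul_def, Tri.one_def, smul_smul, ← MulOpposite.op_mul]
    · refine Prod.ext ?_ (Prod.ext ?_ ?_) <;>
        simp [Tri.mul_def, Tri.one_def, smul_comm (↑v⁻¹ : A2), smul_smul, ← MulOpposite.op_mul]
  have hidem : ∀ (e : A1) (f : A2), IsIdempotentElem e → IsIdempotentElem f →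
      IsIdempotentElem ((e, (0 : M), f) : Tri A1 A2 M) := by
    intro e f he hf
    refine Prod.ext ?_ (Prod.ext ?_ ?_) <;> simp [Tri.mul_def, he.eq, hf.eq]
  refine ⟨hunit, hidem, ?_⟩
  rintro ⟨a, m, b⟩ ha hb
  obtain ⟨u, e, he, hae⟩ := hI a ha
  rcases hae with h | h
  · obtain ⟨v, f, hf, hbf⟩ := hJ b hb
    obtain ⟨w, hw⟩ := hunit u v m
    exact ⟨w, (e, 0, f), hidem e f he hf, Or.inl (by
      rw [hw]; refine Prod.ext ?_ (Prod.ext ?_ ?_) <;> simp [h, hbf])⟩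
  · obtain ⟨v, f, hf, hbf⟩ := hJ (-b) (J.neg_mem hb)
    obtain ⟨w, hw⟩ := hunit u (-v) m
    refine ⟨w, (e, 0, f), hidem e f he hf, Or.inr (by
      rw [hw]
      have hb' : b = -↑v - f := neg_injective (by rw [hbf]; abel)
      refine Prod.ext ?_ (Prod.ext ?_ ?_) <;> simp [h, hb'])⟩
end

section
/- Let R be a commutative ring and I an ideal of R. Then I is a weakly clean ideal of R if and only if the ideal I[[x]] of power series with all coefficients in I is a weakly clean ideal of R[[x]]. -/
/-! A power series is weakly clean exactly when its constant term is: the constant term map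
preserves weak cleanness, and conversely a decomposition `f₀ = u ± e` of the constant term
lifts to `f = (f ∓ C e) ± C e`, where `f ∓ C e` is a unit because its constant term `u` is. -/

theorem IsWeaklyClean.map {R S : Type*} [Ring R] [Ring S] (φ : R →+* S) {x : R}
    (hx : IsWeaklyClean x) : IsWeaklyClean (φ x) := by
  obtain ⟨u, e, he, hxue⟩ := hx
  refine ⟨Units.map φ.toMonoidHom u, φ e, he.map φ, ?_⟩
  rcases hxue with rfl | rfl
  · exact .inl (map_add φ _ _)
  · exact .inr (map_sub φ _ _)

namespace PowerSeries

theorem isWeaklyClean_of_isWeaklyClean_constantCoeff {R : Type*} [Ring R] {f : R⟦X⟧}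
    (hf : IsWeaklyClean (constantCoeff f)) : IsWeaklyClean f := by
  obtain ⟨u, e, he, hfue⟩ := hf
  have hCe : IsIdempotentElem (C e : R⟦X⟧) := he.map C
  rcases hfue with hf₀ | hf₀
  · obtain ⟨v, hv⟩ : IsUnit (f - C e) := by
      rw [isUnit_iff_constantCoeff, map_sub, constantCoeff_C, hf₀, add_sub_cancel_right]
      exact u.isUnit
    exact ⟨v, C e, hCe, .inl (by rw [hv, sub_add_cancel])⟩
  · obtain ⟨v, hv⟩ : IsUnit (f + C e) := by
      rw [isUnit_iff_constantCoeff, map_add, constantCoeff_C, hf₀, sub_add_cancel]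
      exact u.isUnit
    exact ⟨v, C e, hCe, .inr (by rw [hv, add_sub_cancel_right])⟩

theorem isWeaklyClean_iff_isWeaklyClean_constantCoeff {R : Type*} [Ring R] {f : R⟦X⟧} :
    IsWeaklyClean f ↔ IsWeaklyClean (constantCoeff f) :=
  ⟨fun hf => hf.map constantCoeff, isWeaklyClean_of_isWeaklyClean_constantCoeff⟩

end PowerSeries

/-- For a commutative ring R, an ideal I is weakly clean iff I[[x]] is a weakly
clean ideal of R[[x]]. -/
theorem stmt15 {R : Type*} [CommRing R] (I : Ideal R) :
    (∀ a ∈ I, IsWeaklyClean a) ↔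
      (∀ f : PowerSeries R, (∀ n : ℕ, PowerSeries.coeff n f ∈ I) → IsWeaklyClean f) := by
  constructor
  · intro hI f hf
    rw [PowerSeries.isWeaklyClean_iff_isWeaklyClean_constantCoeff,
      ← PowerSeries.coeff_zero_eq_constantCoeff_apply]
    exact hI _ (hf 0)
  · intro hI a ha
    have hCa : ∀ n, PowerSeries.coeff n (PowerSeries.C a) ∈ I := fun n => by
      rw [PowerSeries.coeff_C]
      split_ifs
      exacts [ha, I.zero_mem]
    simpa using
      PowerSeries.isWeaklyClean_iff_isWeaklyClean_constantCoeff.mp (hI (PowerSeries.C a) hCa)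
end

section
/- Let R be a commutative ring, M an R-module, N a submodule of M, and I an ideal of R. Then I is a weakly clean ideal of R if and only if I(N) = {(r, n) : r ∈ I, n ∈ N} is a weakly clean ideal of the idealization R(M). -/
lemma tsze_idem_fst {R M : Type*} [CommRing R] [AddCommGroup M] [Module R M]
    [Module Rᵐᵒᵖ M] [IsCentralScalar R M] {e : TrivSqZeroExt R M}
    (h : IsIdempotentElem e) : IsIdempotentElem e.fst ∧ e.snd = 0 := by
  have h1 : e.fst * e.fst = e.fst := congrArg TrivSqZeroExt.fst h
  have h2 : e.fst • e.snd + MulOpposite.op e.fst • e.snd = e.snd :=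
    congrArg TrivSqZeroExt.snd h
  rw [op_smul_eq_smul] at h2
  have h3 : e.fst • e.snd + e.fst • e.snd = e.fst • e.snd := by
    calc e.fst • e.snd + e.fst • e.snd
        = e.fst • (e.fst • e.snd + e.fst • e.snd) := by
          rw [smul_add, smul_smul, h1]
      _ = e.fst • e.snd := by rw [h2]
  have h4 : e.fst • e.snd = 0 := add_eq_left.mp h3
  have h5 : e.snd = 0 := by
    have := h2
    rw [h4, zero_add] at this
    exact this.symm
  exact ⟨h1, h5⟩

/-- I is a weakly clean ideal of R iff I(N) is a weakly clean ideal of the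
idealization R(M). -/
theorem stmt17 {R M : Type*} [CommRing R] [AddCommGroup M] [Module R M]
    [Module Rᵐᵒᵖ M] [IsCentralScalar R M]
    (I : Ideal R) (N : Submodule R M) :
    (∀ a ∈ I, IsWeaklyClean a) ↔
      (∀ x : TrivSqZeroExt R M, x.fst ∈ I → x.snd ∈ N → IsWeaklyClean x) := by
  constructor
  · intro h x hx _
    obtain ⟨u, e, he, hcase⟩ := h x.fst hx
    have hU : IsUnit (TrivSqZeroExt.inl (M := M) (u : R) + TrivSqZeroExt.inr x.snd) := by
      rw [TrivSqZeroExt.isUnit_iff_isUnit_fst]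
      simp
    refine ⟨hU.unit, TrivSqZeroExt.inl e, ?_, ?_⟩
    · unfold IsIdempotentElem
      rw [← TrivSqZeroExt.inl_mul, he]
    · rw [IsUnit.unit_spec]
      rcases hcase with hc | hc
      · left
        ext <;> simp [hc]
      · right
        ext <;> simp [hc]
  · intro h a ha
    obtain ⟨U, E, hE, hcase⟩ := h (TrivSqZeroExt.inl a) (by simpa) (by simp)
    obtain ⟨hE1, _⟩ := tsze_idem_fst hE
    have hUfst : IsUnit (U : TrivSqZeroExt R M).fst :=
      TrivSqZeroExt.isUnit_iff_isUnit_fst.mp U.isUnit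
    refine ⟨hUfst.unit, (E : TrivSqZeroExt R M).fst, hE1, ?_⟩
    rw [IsUnit.unit_spec]
    rcases hcase with hc | hc
    · left
      have := congrArg TrivSqZeroExt.fst hc
      simpa using this
    · right
      have := congrArg TrivSqZeroExt.fst hc
      simpa using this
end

section
/- Let I be an ideal of a ring R with J(R) ⊆ I and suppose idempotents lift modulo J(R). Then I is a weakly clean ideal of R if and only if I/J(R) is a weakly clean ideal of R/J(R). -/
private lemma aux_left_inv {R : Type*} [Ring R] {j : R}
    (hj : j ∈ TwoSidedIdeal.jacobson (⊥ : TwoSidedIdeal R)) :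
    ∃ z : R, z * (1 + j) = 1 ∧ z - 1 ∈ TwoSidedIdeal.jacobson (⊥ : TwoSidedIdeal R) := by
  obtain ⟨z, hz⟩ := TwoSidedIdeal.mem_jacobson_iff.mp hj 1
  rw [TwoSidedIdeal.mem_bot] at hz
  have h1 : z * j + z = 1 := by rw [sub_eq_zero] at hz; simpa using hz
  refine ⟨z, by rw [mul_add, mul_one, add_comm]; exact h1, ?_⟩
  have h3 : z - 1 = -(z * j) := eq_neg_of_add_eq_zero_left
    (by rw [sub_add_eq_add_sub, add_comm z (z * j), h1, sub_self])
  rw [h3]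
  exact TwoSidedIdeal.jacobson _ |>.neg_mem (TwoSidedIdeal.jacobson _ |>.mul_mem_left _ _ hj)

private lemma aux_one_add_unit {R : Type*} [Ring R] {j : R}
    (hj : j ∈ TwoSidedIdeal.jacobson (⊥ : TwoSidedIdeal R)) :
    IsUnit (1 + j) := by
  obtain ⟨z, hz1, hz2⟩ := aux_left_inv hj
  obtain ⟨w, hw1, -⟩ := aux_left_inv hz2
  rw [add_sub_cancel] at hw1
  have hwz : w = 1 + j := by
    calc w = w * (z * (1 + j)) := by rw [hz1, mul_one]
    _ = (w * z) * (1 + j) := by rw [mul_assoc]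
    _ = 1 + j := by rw [hw1, one_mul]
  exact ⟨⟨1 + j, z, by rw [← hwz]; exact hw1, hz1⟩, rfl⟩

private lemma aux_unit_lift {R : Type*} [Ring R] {u : R}
    (hu : IsUnit ((TwoSidedIdeal.jacobson (⊥ : TwoSidedIdeal R)).ringCon.mk' u)) :
    IsUnit u := by
  set J := TwoSidedIdeal.jacobson (⊥ : TwoSidedIdeal R)
  have hmem : ∀ x : R, J.ringCon.mk' x = 0 ↔ x ∈ J := fun x => by
    rw [TwoSidedIdeal.mem_iff]; exact RingCon.eq _
  obtain ⟨v0, hv0⟩ := hu.exists_right_inv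
  obtain ⟨v, rfl⟩ : ∃ v : R, J.ringCon.mk' v = v0 := Quotient.exists_rep v0
  have h1 : u * v - 1 ∈ J := by
    rw [← hmem]; rw [map_sub, map_mul, hv0, map_one, sub_self]
  have h2 : IsUnit (u * v) := by
    have := aux_one_add_unit h1
    rwa [add_sub_cancel] at this
  obtain ⟨v0', hv0'⟩ := hu.exists_left_inv
  obtain ⟨v', rfl⟩ : ∃ v' : R, J.ringCon.mk' v' = v0' := Quotient.exists_rep v0'
  have h3 : v' * u - 1 ∈ J := by
    rw [← hmem]; rw [map_sub, map_mul, hv0', map_one, sub_self]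
  have h4 : IsUnit (v' * u) := by
    have := aux_one_add_unit h3
    rwa [add_sub_cancel] at this
  obtain ⟨w, hw⟩ := h2
  obtain ⟨w', hw'⟩ := h4
  have hr : u * (v * ↑w⁻¹) = 1 := by rw [← mul_assoc, ← hw, w.mul_inv]
  have hl : (↑w'⁻¹ * v') * u = 1 := by rw [mul_assoc, ← hw', w'.inv_mul]
  have hlr : (↑w'⁻¹ * v' : R) = v * ↑w⁻¹ := by
    calc (↑w'⁻¹ * v' : R) = (↑w'⁻¹ * v') * (u * (v * ↑w⁻¹)) := by rw [hr, mul_one]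
    _ = ((↑w'⁻¹ * v') * u) * (v * ↑w⁻¹) := by noncomm_ring
    _ = v * ↑w⁻¹ := by rw [hl, one_mul]
  exact ⟨⟨u, v * ↑w⁻¹, hr, by rw [← hlr]; exact hl⟩, rfl⟩

/-- Let I be an ideal of R with J(R) ⊆ I and suppose idempotents lift modulo J(R).
Then I is a weakly clean ideal of R iff I/J(R) is a weakly clean ideal of R/J(R). -/
theorem stmt18 {R : Type*} [Ring R] (I : Ideal R)
    (J : TwoSidedIdeal R) (hJ : J = TwoSidedIdeal.jacobson ⊥)
    (hJI : ∀ x ∈ J, x ∈ I)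
    (hlift : ∀ x : R, x * x - x ∈ J → ∃ e : R, IsIdempotentElem e ∧ e - x ∈ J) :
    (∀ a ∈ I, IsWeaklyClean a) ↔
      (∀ a ∈ I, IsWeaklyClean (J.ringCon.mk' a)) := by
  subst hJ
  set J := TwoSidedIdeal.jacobson (⊥ : TwoSidedIdeal R) with hJ
  set π := J.ringCon.mk'
  have hmem : ∀ x : R, π x = 0 ↔ x ∈ J := fun x => by
    rw [TwoSidedIdeal.mem_iff]; exact RingCon.eq _
  constructor
  · rintro h a ha
    obtain ⟨u, e, he, heq⟩ := h a ha
    refine ⟨Units.map (π : R →* _) u, π e, ?_, ?_⟩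
    · unfold IsIdempotentElem; rw [← map_mul, he]
    · rcases heq with h' | h'
      · left; rw [h', map_add]; rfl
      · right; rw [h', map_sub]; rfl
  · rintro h a ha
    obtain ⟨v, ε, hε, heq⟩ := h a ha
    obtain ⟨x, hx⟩ : ∃ x : R, π x = ε := Quotient.exists_rep ε
    have hxx : x * x - x ∈ J := by
      rw [← hmem, map_sub, map_mul, hx]; rw [sub_eq_zero]; exact hε
    obtain ⟨e, he, hex⟩ := hlift x hxx
    have hπe : π e = ε := by
      have : π (e - x) = 0 := (hmem _).mpr hex
      rw [map_sub, hx, sub_eq_zero] at this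
      exact this
    rcases heq with h' | h'
    · -- π a = v + ε, take u := a - e
      have hu : π (a - e) = (v : J.ringCon.Quotient) := by
        rw [map_sub, h', hπe, add_sub_cancel_right]
      have : IsUnit (a - e) :=
        aux_unit_lift (by rw [show (TwoSidedIdeal.jacobson (⊥ : TwoSidedIdeal R)).ringCon.mk' (a - e) = π (a - e) from rfl, hu]; exact v.isUnit)
      obtain ⟨u, huu⟩ := this
      exact ⟨u, e, he, Or.inl (by rw [huu, sub_add_cancel])⟩
    · -- π a = v - ε, take u := a + e
      have hu : π (a + e) = (v : J.ringCon.Quotient) := by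
        rw [map_add, h', hπe, sub_add_cancel]
      have : IsUnit (a + e) :=
        aux_unit_lift (by rw [show (TwoSidedIdeal.jacobson (⊥ : TwoSidedIdeal R)).ringCon.mk' (a + e) = π (a + e) from rfl, hu]; exact v.isUnit)
      obtain ⟨u, huu⟩ := this
      exact ⟨u, e, he, Or.inr (by rw [huu, add_sub_cancel_right])⟩
end

section
/- If I and J are ideals of a ring R, I is a weakly clean ideal, and J ⊆ J(R), then I + J is a weakly clean ideal of R. -/
private lemma left_inv_of_mem_jac {R : Type*} [Ring R] {z : R}
    (hz : z ∈ Ideal.jacobson (⊥ : Ideal R)) : ∃ s : R, s * (1 + z) = 1 := by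
  obtain ⟨s, hs⟩ := Ideal.exists_mul_sub_mem_of_sub_one_mem_jacobson (1 + z) (by simpa using hz)
  rw [Ideal.mem_bot, sub_eq_zero] at hs
  exact ⟨s, hs⟩

private lemma isUnit_one_add_jac {R : Type*} [Ring R] {z : R}
    (hz : z ∈ Ideal.jacobson (⊥ : Ideal R)) : IsUnit (1 + z) := by
  obtain ⟨s, hs⟩ := left_inv_of_mem_jac hz
  have hseq : s = 1 + (-(s * z)) := by
    have h2 : s * (1 + z) = s + s * z := by noncomm_ring
    rw [h2] at hs
    linear_combination (norm := noncomm_ring) hs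
  have hmem : -(s * z) ∈ Ideal.jacobson (⊥ : Ideal R) := by
    exact neg_mem (Ideal.mul_mem_left _ s hz)
  obtain ⟨t, ht⟩ := left_inv_of_mem_jac hmem
  rw [← hseq] at ht
  have hteq : t = 1 + z := by
    calc t = t * (s * (1 + z)) := by rw [hs, mul_one]
    _ = (t * s) * (1 + z) := by rw [mul_assoc]
    _ = 1 + z := by rw [ht, one_mul]
  rw [hteq] at ht
  exact ⟨⟨1 + z, s, ht, hs⟩, rfl⟩

private lemma isUnit_add_jac {R : Type*} [Ring R] (u : Rˣ) {b : R}
    (hb : b ∈ Ideal.jacobson (⊥ : Ideal R)) : IsUnit ((u : R) + b) := by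
  have hz : (↑u⁻¹ : R) * b ∈ Ideal.jacobson (⊥ : Ideal R) :=
    Ideal.mul_mem_left _ _ hb
  have h1 : IsUnit (1 + (↑u⁻¹ : R) * b) := isUnit_one_add_jac hz
  have : (u : R) + b = u * (1 + (↑u⁻¹ : R) * b) := by
    rw [mul_add, mul_one, ← mul_assoc, Units.mul_inv, one_mul]
  rw [this]
  exact u.isUnit.mul h1

/-- If I is a weakly clean ideal and J ⊆ J(R), then I + J is a weakly clean ideal. -/
theorem stmt19 {R : Type*} [Ring R] (I J : Ideal R)
    (hI : ∀ a ∈ I, IsWeaklyClean a) (hJ : J ≤ Ideal.jacobson ⊥) :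
    ∀ x ∈ I + J, IsWeaklyClean x := by
  intro x hx
  obtain ⟨a, ha, b, hb, rfl⟩ := Submodule.mem_sup.mp hx
  obtain ⟨u, e, he, h⟩ := hI a ha
  have hb' : b ∈ Ideal.jacobson (⊥ : Ideal R) := hJ hb
  have hu : IsUnit ((u : R) + b) := isUnit_add_jac u hb'
  obtain ⟨v, hv⟩ := hu
  refine ⟨v, e, he, ?_⟩
  rcases h with h | h
  · left; rw [h, hv]; abel
  · right; rw [h, hv]; abel
end
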